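/- Let q be a prime power, ℓ a positive integer, and F_{q^{2ℓ}} the finite field with q^{2ℓ} elements containing F_q as a subfield. Then the number of elements ζ of the cyclic subgroup of order q^ℓ + 1 of the multiplicative group F_{q^{2ℓ}}^* (i.e., elements with ζ^{q^ℓ+1} = 1) that have exactly 2ℓ Galois conjugates over F_q is greater than (1 − 3/q^{ℓ/2})·(q^ℓ + 1). -/

import Mathlib

open Polynomial Finset IntermediateField

/-!
Let μ be the group of (q^ℓ+1)-th roots of unity in K. If ζ ∈ μ has degree d < 2ℓ over F, then
d divides 2ℓ/p for some prime p ∣ 2ℓ, so ζ^(q^(2ℓ/p)) = ζ. For p = 2 this and ζ^(q^ℓ) = ζ⁻¹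
give ζ² = 1. For odd p ∣ ℓ put a = q^(ℓ/p): then ζ^(a²) = ζ, hence ζ^(q^ℓ) = ζ^(a^p) = ζ^a and
ζ^(a+1) = 1. So at most 2 + ∑_{p odd} (q^(ℓ/p) + 1) ≤ 3 q^⌊ℓ/3⌋ ≤ 3 q^(ℓ/2) elements of μ,
which has q^ℓ + 1 elements, have degree less than 2ℓ.
-/

theorem Nat.exists_prime_dvd_and_dvd_div_of_dvd_of_ne {d n : ℕ} (hdn : d ∣ n) (hne : d ≠ n) :
    ∃ p, p.Prime ∧ p ∣ n ∧ d ∣ n / p := by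
  obtain ⟨k, rfl⟩ := hdn
  obtain ⟨p, hp, t, rfl⟩ := Nat.exists_prime_and_dvd (n := k) (by rintro rfl; simp at hne)
  refine ⟨p, hp, Dvd.intro_left (d * t) (by ring), t, ?_⟩
  rw [mul_left_comm, Nat.mul_div_cancel_left _ hp.pos]

theorem Nat.sum_primeFactors_erase_two_le_sum_Icc (ℓ : ℕ) (f : ℕ → ℕ) :
    ∑ p ∈ ℓ.primeFactors.erase 2, f (ℓ / p) ≤ ∑ j ∈ Icc 1 (ℓ / 3), f j := by
  have hinj : Set.InjOn (ℓ / ·) (ℓ.primeFactors.erase 2 : Set ℕ) := by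
    intro p hp p' hp' hpp
    have hpℓ := Nat.dvd_of_mem_primeFactors (mem_of_mem_erase hp)
    have hp'ℓ := Nat.dvd_of_mem_primeFactors (mem_of_mem_erase hp')
    have hℓ := (Nat.mem_primeFactors.1 (mem_of_mem_erase hp)).2.2
    rw [← Nat.div_div_self hpℓ hℓ, ← Nat.div_div_self hp'ℓ hℓ]
    exact congrArg (ℓ / ·) hpp
  rw [← sum_image hinj]
  refine sum_le_sum_of_subset fun j hj => ?_
  obtain ⟨p, hp, rfl⟩ := mem_image.1 hj
  obtain ⟨hp2, hpf⟩ := mem_erase.1 hp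
  have hp3 : 3 ≤ p := (Nat.prime_of_mem_primeFactors hpf).two_le.lt_of_ne' hp2
  exact mem_Icc.2 ⟨(Nat.one_le_div_iff (by omega)).2 (Nat.le_of_mem_primeFactors hpf),
    Nat.div_le_div_left hp3 (by norm_num)⟩

theorem sum_Icc_pow_add_one_add_two_le {q : ℕ} (hq : 2 ≤ q) (m : ℕ) :
    ∑ j ∈ Icc 1 m, (q ^ j + 1) + 2 ≤ 3 * q ^ m := by
  induction m with
  | zero => simp
  | succ m ih =>
    rw [sum_Icc_succ_top (by omega), pow_succ]
    have hqm : q ^ m * 2 ≤ q ^ m * q := Nat.mul_le_mul_left _ hq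
    have hqm_pos : 1 ≤ q ^ m := Nat.one_le_pow _ _ (by omega)
    nlinarith

theorem pow_pow_eq_self_of_pow_eq_self {M : Type*} [Monoid M] {x : M} {a : ℕ} (h : x ^ a = x)
    (n : ℕ) : x ^ a ^ n = x := by
  induction n with
  | zero => simp
  | succ n ih => rw [pow_succ, pow_mul, ih, h]

theorem pow_add_one_eq_one_of_pow_sq_eq_self {M : Type*} [Monoid M] {x : M} {a p : ℕ}
    (hx : x ^ a ^ 2 = x) (hp : Odd p) (h : x ^ (a ^ p + 1) = 1) : x ^ (a + 1) = 1 := by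
  obtain ⟨k, rfl⟩ := hp
  have : x ^ a ^ (2 * k + 1) = x ^ a := by
    rw [pow_succ, pow_mul, pow_mul, pow_pow_eq_self_of_pow_eq_self hx]
  rwa [pow_succ, this, ← pow_succ] at h

theorem card_nthRootsFinset_le {R : Type*} [CommRing R] [IsDomain R] (n : ℕ) (a : R) :
    #(nthRootsFinset n a) ≤ n := by
  classical
  rw [nthRootsFinset_def]
  exact (Multiset.toFinset_card_le _).trans (card_nthRoots n a)

theorem FiniteField.card_nthRootsFinset_one {K : Type*} [Field K] [Fintype K] {n : ℕ}
    (hn : n ∣ Fintype.card K - 1) : #(nthRootsFinset n (1 : K)) = n := by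
  classical
  obtain ⟨g, hg⟩ := IsCyclic.exists_ofOrder_eq_natCard (α := Kˣ)
  rw [Nat.card_eq_fintype_card, Fintype.card_units] at hg
  have hg0 : orderOf g ≠ 0 := by
    have := Fintype.one_lt_card (α := K)
    omega
  have hord := orderOf_pow_orderOf_div hg0 (hg ▸ hn)
  rw [← orderOf_units] at hord
  exact hord ▸ (IsPrimitiveRoot.orderOf _).card_nthRootsFinset

section FiniteField

variable (F : Type*) {K : Type*} [Field F] [Fintype F] [Field K] [Algebra F K]

theorem pow_card_pow_natDegree_minpoly {ζ : K} (hζ : IsIntegral F ζ) :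
    ζ ^ Fintype.card F ^ (minpoly F ζ).natDegree = ζ := by
  have : FiniteDimensional F F⟮ζ⟯ := adjoin.finiteDimensional hζ
  have : Finite F⟮ζ⟯ := Module.finite_of_finite F
  let : Fintype F⟮ζ⟯ := Fintype.ofFinite _
  have hcard : Fintype.card F⟮ζ⟯ = Fintype.card F ^ (minpoly F ζ).natDegree := by
    rw [Module.card_eq_pow_finrank (K := F), adjoin.finrank hζ]
  have h := congrArg (algebraMap F⟮ζ⟯ K)
    (FiniteField.pow_card (AdjoinSimple.gen F ζ))
  rwa [hcard, map_pow, AdjoinSimple.algebraMap_gen] at h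

variable [FiniteDimensional F K]

theorem exists_prime_dvd_finrank_and_pow_eq_self_of_natDegree_minpoly_ne {ζ : K}
    (h : (minpoly F ζ).natDegree ≠ Module.finrank F K) :
    ∃ p, p.Prime ∧ p ∣ Module.finrank F K ∧
      ζ ^ Fintype.card F ^ (Module.finrank F K / p) = ζ := by
  have hζ : IsIntegral F ζ := .of_finite F ζ
  obtain ⟨p, hp, hpn, c, hc⟩ :=
    Nat.exists_prime_dvd_and_dvd_div_of_dvd_of_ne (minpoly.degree_dvd hζ) h
  refine ⟨p, hp, hpn, ?_⟩
  rw [hc, pow_mul, pow_pow_eq_self_of_pow_eq_self (pow_card_pow_natDegree_minpoly F hζ)]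

theorem sq_eq_one_or_exists_pow_card_pow_div_add_one_eq_one {ℓ : ℕ}
    (hK : Module.finrank F K = 2 * ℓ) {ζ : K} (hζ : ζ ^ (Fintype.card F ^ ℓ + 1) = 1)
    (hdeg : (minpoly F ζ).natDegree ≠ 2 * ℓ) :
    ζ ^ 2 = 1 ∨ ∃ p ∈ ℓ.primeFactors.erase 2, ζ ^ (Fintype.card F ^ (ℓ / p) + 1) = 1 := by
  obtain ⟨p, hp, hpdvd, hpow⟩ :=
    exists_prime_dvd_finrank_and_pow_eq_self_of_natDegree_minpoly_ne F (hK ▸ hdeg)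
  rw [hK] at hpdvd hpow
  by_cases hp2 : p = 2
  · subst hp2
    rw [Nat.mul_div_cancel_left _ two_pos] at hpow
    rw [pow_succ, hpow] at hζ
    exact Or.inl (by rwa [sq])
  obtain ⟨m, rfl⟩ : p ∣ ℓ := ((Nat.Prime.dvd_mul hp).1 hpdvd).resolve_left
    fun h => hp2 ((Nat.prime_dvd_prime_iff_eq hp Nat.prime_two).1 h)
  have hm : m ≠ 0 := by
    rintro rfl
    exact (Module.finrank_pos (R := F) (M := K)).ne' (by simpa using hK)
  refine Or.inr ⟨p, ?_, ?_⟩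
  · exact mem_erase.2
      ⟨hp2, Nat.mem_primeFactors.2 ⟨hp, dvd_mul_right p m, mul_ne_zero hp.ne_zero hm⟩⟩
  · have hdiv : 2 * (p * m) / p = m * 2 := by
      rw [mul_left_comm, Nat.mul_div_cancel_left _ hp.pos, mul_comm]
    rw [hdiv, pow_mul] at hpow
    rw [Nat.mul_div_cancel_left m hp.pos]
    rw [pow_mul'] at hζ
    exact pow_add_one_eq_one_of_pow_sq_eq_self hpow (hp.odd_of_ne_two hp2) hζ

theorem card_filter_natDegree_minpoly_ne_le {ℓ : ℕ} (hK : Module.finrank F K = 2 * ℓ) :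
    #{ζ ∈ nthRootsFinset (Fintype.card F ^ ℓ + 1) (1 : K) | (minpoly F ζ).natDegree ≠ 2 * ℓ}
      ≤ 3 * Fintype.card F ^ (ℓ / 3) := by
  classical
  set q := Fintype.card F
  have hsub : {ζ ∈ nthRootsFinset (q ^ ℓ + 1) (1 : K) | (minpoly F ζ).natDegree ≠ 2 * ℓ} ⊆
      nthRootsFinset 2 1 ∪
        (ℓ.primeFactors.erase 2).biUnion fun p => nthRootsFinset (q ^ (ℓ / p) + 1) 1 := by
    intro ζ hζ
    obtain ⟨hζμ, hdeg⟩ := mem_filter.1 hζ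
    rcases sq_eq_one_or_exists_pow_card_pow_div_add_one_eq_one F hK
      ((mem_nthRootsFinset (by positivity) 1).1 hζμ) hdeg with h | ⟨p, hp, h⟩
    · exact mem_union_left _ ((mem_nthRootsFinset two_pos 1).2 h)
    · exact mem_union_right _
        (mem_biUnion.2 ⟨p, hp, (mem_nthRootsFinset (by positivity) 1).2 h⟩)
  calc _ ≤ 2 + ∑ p ∈ ℓ.primeFactors.erase 2, (q ^ (ℓ / p) + 1) :=
        (card_le_card hsub).trans <| (card_union_le _ _).trans <|
          add_le_add (card_nthRootsFinset_le 2 1)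
            (card_biUnion_le.trans (sum_le_sum fun p _ => card_nthRootsFinset_le _ 1))
    _ ≤ 2 + ∑ j ∈ Icc 1 (ℓ / 3), (q ^ j + 1) := by
        gcongr
        exact Nat.sum_primeFactors_erase_two_le_sum_Icc ℓ (q ^ · + 1)
    _ ≤ 3 * q ^ (ℓ / 3) := by
        linarith [sum_Icc_pow_add_one_add_two_le (Fintype.one_lt_card (α := F)) (ℓ / 3)]

end FiniteField

theorem one_sub_three_div_rpow_mul_lt {x : ℝ} (hx : 1 ≤ x) (ℓ : ℕ) {b : ℝ}
    (hb : b ≤ 3 * x ^ (ℓ / 3)) :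
    (1 - 3 / x ^ ((ℓ : ℝ) / 2)) * (x ^ ℓ + 1) < x ^ ℓ + 1 - b := by
  set Q := x ^ ((ℓ : ℝ) / 2)
  have hQ : 0 < Q := by positivity
  have hQQ : Q * Q = x ^ ℓ := by
    rw [← Real.rpow_add (by linarith), ← Real.rpow_natCast]
    ring_nf
  have hxQ : x ^ (ℓ / 3) ≤ Q := by
    rw [← Real.rpow_natCast]
    refine Real.rpow_le_rpow_of_exponent_le hx ((le_div_iff₀ two_pos).2 ?_)
    exact_mod_cast (by omega : ℓ / 3 * 2 ≤ ℓ)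
  have hbQ : b * Q < 3 * (x ^ ℓ + 1) := by
    calc b * Q ≤ 3 * x ^ (ℓ / 3) * Q := mul_le_mul_of_nonneg_right hb hQ.le
      _ ≤ 3 * (Q * Q) := by nlinarith
      _ < 3 * (x ^ ℓ + 1) := by linarith
  have : b < 3 * (x ^ ℓ + 1) / Q := (lt_div_iff₀ hQ).2 hbQ
  calc (1 - 3 / Q) * (x ^ ℓ + 1) = x ^ ℓ + 1 - 3 * (x ^ ℓ + 1) / Q := by ring
    _ < x ^ ℓ + 1 - b := by linarith

theorem count_degree_two_ell_elements_in_cyclic_subgroup_general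
    (F K : Type) [Field F] [Fintype F]
    [Field K] [Fintype K] [Algebra F K] (q ℓ : ℕ)
    (hq : q = Fintype.card F)
    (hK : Fintype.card K = q ^ (2 * ℓ)) :
    (1 - 3 / (q : ℝ) ^ ((ℓ : ℝ) / 2)) * ((q : ℝ) ^ ℓ + 1)
      < (Nat.card {ζ : K // ζ ^ (q ^ ℓ + 1) = 1
          ∧ (minpoly F ζ).natDegree = 2 * ℓ} : ℝ) := by
  classical
  subst hq
  set q := Fintype.card F
  have hfinrank : Module.finrank F K = 2 * ℓ :=
    Nat.pow_right_injective Fintype.one_lt_card (Module.card_eq_pow_finrank.symm.trans hK)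
  set μ := nthRootsFinset (q ^ ℓ + 1) (1 : K)
  have hμ : #μ = q ^ ℓ + 1 := by
    refine FiniteField.card_nthRootsFinset_one ⟨q ^ ℓ - 1, ?_⟩
    rw [hK, pow_mul', ← Nat.sq_sub_sq, one_pow]
  have hcount : Nat.card {ζ : K // ζ ^ (q ^ ℓ + 1) = 1
      ∧ (minpoly F ζ).natDegree = 2 * ℓ} = #{ζ ∈ μ | (minpoly F ζ).natDegree = 2 * ℓ} := by
    rw [Nat.card_eq_fintype_card, Fintype.card_subtype]
    congr 1
    ext ζ
    simp [μ, mem_nthRootsFinset]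
  have hsplit :=
    card_filter_add_card_filter_not (s := μ) fun ζ => (minpoly F ζ).natDegree = 2 * ℓ
  rw [hμ] at hsplit
  have hgood : (#{ζ ∈ μ | (minpoly F ζ).natDegree = 2 * ℓ} : ℝ)
      = (q : ℝ) ^ ℓ + 1 - #{ζ ∈ μ | (minpoly F ζ).natDegree ≠ 2 * ℓ} := by
    rw [eq_sub_iff_add_eq]
    exact_mod_cast hsplit
  rw [hcount, hgood]
  exact one_sub_three_div_rpow_mul_lt (by exact_mod_cast Fintype.card_pos) ℓ
    (by exact_mod_cast card_filter_natDegree_minpoly_ne_le F hfinrank)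

theorem count_degree_two_ell_elements_in_cyclic_subgroup
    (F K : Type) [Field F] [Fintype F]
    [Field K] [Fintype K] [Algebra F K] (q ℓ : ℕ)
    (hq : q = Fintype.card F) (hℓ : 0 < ℓ)
    (hK : Fintype.card K = q ^ (2 * ℓ)) :
    (1 - 3 / (q : ℝ) ^ ((ℓ : ℝ) / 2)) * ((q : ℝ) ^ ℓ + 1)
      < (Nat.card {ζ : K // ζ ^ (q ^ ℓ + 1) = 1
          ∧ (minpoly F ζ).natDegree = 2 * ℓ} : ℝ) :=
  count_degree_two_ell_elements_in_cyclic_subgroup_general F K q ℓ hq hK
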